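/- Let M_n = V diag(Λ_{n1},…,Λ_{nd}) V⁻¹, n = 1,…,N, be jointly diagonalizable real d×d matrices with γ = min_{i<i'} Σ_{n=1}^N (Λ_{ni} − Λ_{ni'})² > 0, and let U₀ be an exact joint triangularizer of {M_n}. Then the (d(d−1)/2)×(d(d−1)/2) matrix T = Σ_{n=1}^N t_nᵀ t_n, with t_n = P_low (I ⊗ U₀ᵀ M_nᵀ U₀ − U₀ᵀ M_n U₀ ⊗ I) P_lowᵀ, is invertible, its smallest singular value satisfies σ_min(T) ≥ γ/κ(V)⁴, and ‖T⁻¹‖ ≤ √(d(d−1)/2) · κ(V)⁴/γ. -/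

import Mathlib

open Matrix Kronecker BigOperators

noncomputable section

/-- Square real matrices. -/
abbrev Mat (d : ℕ) := Matrix (Fin d) (Fin d) ℝ

/-- Strictly lower-triangular part: `[low A]_{ij} = A_{ij}` if `i > j`, else `0`. -/
def lowPart {d : ℕ} (A : Mat d) : Mat d :=
  Matrix.of fun i j => if (j : ℕ) < (i : ℕ) then A i j else 0

/-- Frobenius norm. -/
def frob {m n : Type*} [Fintype m] [Fintype n] (A : Matrix m n ℝ) : ℝ :=
  Real.sqrt (∑ i, ∑ j, (A i j) ^ 2)

/-- Euclidean norm of a vector. -/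
def euclNorm {m : Type*} [Fintype m] (v : m → ℝ) : ℝ :=
  Real.sqrt (∑ i, (v i) ^ 2)

/-- Largest singular value. -/
def sigMax {m n : Type*} [Fintype m] [Fintype n] (A : Matrix m n ℝ) : ℝ :=
  sSup {r | ∃ x : n → ℝ, euclNorm x = 1 ∧ r = euclNorm (A.mulVec x)}

/-- Smallest singular value. -/
def sigMin {m n : Type*} [Fintype m] [Fintype n] (A : Matrix m n ℝ) : ℝ :=
  sInf {r | ∃ x : n → ℝ, euclNorm x = 1 ∧ r = euclNorm (A.mulVec x)}

/-- Spectral norm (largest singular value). -/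
def specNorm {m n : Type*} [Fintype m] [Fintype n] (A : Matrix m n ℝ) : ℝ := sigMax A

/-- Condition number `κ(A) = σ_max(A)/σ_min(A)`. -/
def condNum {m n : Type*} [Fintype m] [Fintype n] (A : Matrix m n ℝ) : ℝ :=
  sigMax A / sigMin A

/-- Matrix exponential. -/
def matExp {d : ℕ} (A : Mat d) : Mat d := ∑' k : ℕ, ((k.factorial : ℝ))⁻¹ • A ^ k

/-- Column-wise vectorization: index `(j, i)` holds the `(i, j)` entry. -/
def vecM {d : ℕ} (A : Mat d) : Fin d × Fin d → ℝ := fun p => A p.2 p.1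

/-- Inverse of the column-wise vectorization. -/
def matM {d : ℕ} (v : Fin d × Fin d → ℝ) : Mat d := Matrix.of fun i j => v (j, i)

/-- The `d² × d²` diagonal 0/1 matrix `Low` with `Low (vec A) = vec (low A)`. -/
def lowOp (d : ℕ) : Matrix (Fin d × Fin d) (Fin d × Fin d) ℝ :=
  Matrix.diagonal fun p => if (p.1 : ℕ) < (p.2 : ℕ) then 1 else 0

/-- `P` is a valid `P_low` projector: `P Pᵀ = 1` and `Pᵀ P = Low`. -/
def IsPlow {d k : ℕ} (P : Matrix (Fin k) (Fin d × Fin d) ℝ) : Prop :=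
  P * Pᵀ = 1 ∧ Pᵀ * P = lowOp d

/-- Orthogonal matrix. -/
def IsOrtho {d : ℕ} (U : Mat d) : Prop := Uᵀ * U = 1

/-- Skew-symmetric matrix. -/
def IsSkew {d : ℕ} (X : Mat d) : Prop := Xᵀ = -X

/-- Matrix commutator. -/
def mcomm {d : ℕ} (A B : Mat d) : Mat d := A * B - B * A

/-- `U₀` is an exact joint triangularizer of the family `M`. -/
def ExactTriang {d N : ℕ} (U₀ : Mat d) (M : Fin N → Mat d) : Prop :=
  IsOrtho U₀ ∧ ∀ n, lowPart (U₀ᵀ * M n * U₀) = 0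

/-- The joint triangularization loss `L(U) = Σₙ ‖low(Uᵀ M̂ₙ U)‖²`. -/
def Loss {d N : ℕ} (Mh : Fin N → Mat d) (U : Mat d) : ℝ :=
  ∑ n, (frob (lowPart (Uᵀ * Mh n * U))) ^ 2

/-- Stationary point of the loss on the orthogonal group: the Riemannian
gradient vanishes, i.e. all directional derivatives along skew directions vanish. -/
def IsStationaryPt {d N : ℕ} (Mh : Fin N → Mat d) (U : Mat d) : Prop :=
  IsOrtho U ∧ ∀ X : Mat d, IsSkew X →
    deriv (fun t : ℝ => Loss Mh (U * matExp (t • X))) 0 = 0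

/-- The operator `t̃ = P_low (1 ⊗ Aᵀ − A ⊗ 1) P_lowᵀ`. -/
def ttil {d k : ℕ} (P : Matrix (Fin k) (Fin d × Fin d) ℝ) (A : Mat d) :
    Matrix (Fin k) (Fin k) ℝ :=
  P * ((1 : Mat d) ⊗ₖ Aᵀ - A ⊗ₖ (1 : Mat d)) * Pᵀ

/-- The joint eigengap `γ = min_{i<i'} Σₙ (Λ_{ni} − Λ_{ni'})²`. -/
def gapMin {d N : ℕ} (Λ : Fin N → Fin d → ℝ) : ℝ :=
  sInf {r | ∃ i i' : Fin d, i < i' ∧ r = ∑ n, (Λ n i - Λ n i') ^ 2}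

/-!
Write `Aₙ = U₀ᵀ Mₙ U₀ = B Dₙ B⁻¹` with `B = U₀ᵀ V` and `Dₙ = diag(Λₙ)`. The `Aₙ` are upper
triangular and their joint eigenvalues are separated, so the columns of `B` can be permuted to
make `B` upper triangular. For `x` in `ℝᵏ`, `X = mat(P_lowᵀ x)` is strictly lower triangular with
`‖X‖ = ‖x‖` and `‖tₙ x‖ = ‖Aₙᵀ X − X Aₙᵀ‖`. Conjugating by `Bᵀ` turns these commutators into
`Dₙ Y − Y Dₙ` with `Y = Bᵀ X B⁻ᵀ`, whose diagonal vanishes by triangularity, so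
`Σₙ ‖Dₙ Y − Y Dₙ‖² ≥ γ ‖Y‖²`. Undoing the conjugations costs `κ(V)⁴`, hence
`xᵀ T x ≥ γ / κ(V)⁴ · ‖x‖²`, which gives invertibility, the bound on `σ_min(T)`, and
`‖T⁻¹‖ ≤ √k ‖T⁻¹‖₂ ≤ √k κ(V)⁴ / γ`.
-/

section SingularValues

open scoped Matrix.Norms.L2Operator

variable {m n : Type*} [Fintype m] [Fintype n]

lemma euclNorm_eq_norm (v : m → ℝ) : euclNorm v = ‖WithLp.toLp 2 v‖ := by
  simp [euclNorm, EuclideanSpace.norm_eq]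

lemma euclNorm_nonneg (v : m → ℝ) : 0 ≤ euclNorm v := Real.sqrt_nonneg _

lemma euclNorm_smul (c : ℝ) (v : m → ℝ) : euclNorm (c • v) = |c| * euclNorm v := by
  simp [euclNorm_eq_norm, norm_smul]

lemma euclNorm_sq (v : m → ℝ) : euclNorm v ^ 2 = v ⬝ᵥ v := by
  rw [euclNorm, Real.sq_sqrt (by positivity)]
  simp [dotProduct, sq]

lemma dotProduct_le_euclNorm_mul (v w : m → ℝ) : v ⬝ᵥ w ≤ euclNorm v * euclNorm w := by
  simpa [euclNorm_eq_norm, EuclideanSpace.inner_eq_star_dotProduct, dotProduct_comm] using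
    real_inner_le_norm (WithLp.toLp 2 v) (WithLp.toLp 2 w)

lemma euclNorm_mulVec_of_transpose_mul_mulVec {Q : Matrix m n ℝ} {x : n → ℝ}
    (h : (Qᵀ * Q) *ᵥ x = x) :
    euclNorm (Q *ᵥ x) = euclNorm x := by
  refine (sq_eq_sq₀ (euclNorm_nonneg _) (euclNorm_nonneg _)).1 ?_
  rw [euclNorm_sq, euclNorm_sq, dotProduct_mulVec, ← mulVec_transpose, mulVec_mulVec, h]

lemma sigMax_eq_l2_opNorm [DecidableEq n] (A : Matrix m n ℝ) : sigMax A = ‖A‖ := by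
  rw [sigMax, l2_opNorm_def, ← ContinuousLinearMap.sSup_sphere_eq_norm]
  congr 1
  ext r
  constructor
  · rintro ⟨x, hx, rfl⟩
    refine ⟨WithLp.toLp 2 x, by simpa [euclNorm_eq_norm] using hx, ?_⟩
    simp [euclNorm_eq_norm]
  · rintro ⟨x, hx, rfl⟩
    refine ⟨x.ofLp, by simpa [euclNorm_eq_norm] using hx, ?_⟩
    simp only [euclNorm_eq_norm]
    rfl

lemma sigMax_nonneg (A : Matrix m n ℝ) : 0 ≤ sigMax A := by
  classical
  rw [sigMax_eq_l2_opNorm]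
  exact norm_nonneg _

lemma euclNorm_mulVec_le (A : Matrix m n ℝ) (x : n → ℝ) :
    euclNorm (A *ᵥ x) ≤ sigMax A * euclNorm x := by
  classical
  simpa [sigMax_eq_l2_opNorm, euclNorm_eq_norm] using l2_opNorm_mulVec A (WithLp.toLp 2 x)

lemma sigMax_le {A : Matrix m n ℝ} {c : ℝ} (hc : 0 ≤ c)
    (h : ∀ x, euclNorm (A *ᵥ x) ≤ c * euclNorm x) : sigMax A ≤ c := by
  classical
  rw [sigMax_eq_l2_opNorm, l2_opNorm_def]
  refine ContinuousLinearMap.opNorm_le_bound _ hc fun x => ?_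
  show ‖WithLp.toLp 2 (A *ᵥ x.ofLp)‖ ≤ c * ‖x‖
  simpa [euclNorm_eq_norm] using h x.ofLp

lemma sigMax_mul_le {p : Type*} [Fintype p] (A : Matrix m n ℝ) (B : Matrix n p ℝ) :
    sigMax (A * B) ≤ sigMax A * sigMax B := by
  classical
  simpa only [sigMax_eq_l2_opNorm] using l2_opNorm_mul A B

lemma sigMax_transpose (A : Matrix m n ℝ) : sigMax Aᵀ = sigMax A := by
  classical
  rw [sigMax_eq_l2_opNorm, sigMax_eq_l2_opNorm, ← conjTranspose_eq_transpose_of_trivial,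
    l2_opNorm_conjTranspose]

lemma sigMax_le_one_of_transpose_mul_self [DecidableEq n] {Q : Matrix m n ℝ}
    (hQ : Qᵀ * Q = 1) : sigMax Q ≤ 1 :=
  sigMax_le zero_le_one fun x => by
    rw [euclNorm_mulVec_of_transpose_mul_mulVec (by rw [hQ, one_mulVec]), one_mul]

lemma sigMax_pos [DecidableEq n] {A : Matrix m n ℝ} (hA : A ≠ 0) : 0 < sigMax A := by
  rw [sigMax_eq_l2_opNorm]
  exact norm_pos_iff.2 hA

lemma le_sigMin [Nonempty n] {A : Matrix m n ℝ} {c : ℝ}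
    (h : ∀ x, c * euclNorm x ≤ euclNorm (A *ᵥ x)) : c ≤ sigMin A := by
  classical
  refine le_csInf ⟨_, Pi.single (Classical.arbitrary n) 1, by simp [euclNorm_eq_norm], rfl⟩ ?_
  rintro r ⟨x, hx, rfl⟩
  simpa [hx] using h x

lemma sigMin_mul_euclNorm_le (A : Matrix m n ℝ) (x : n → ℝ) :
    sigMin A * euclNorm x ≤ euclNorm (A *ᵥ x) := by
  rcases (euclNorm_nonneg x).eq_or_lt with hx | hx
  · rw [← hx, mul_zero]
    exact euclNorm_nonneg _
  have hunit : euclNorm ((euclNorm x)⁻¹ • x) = 1 := by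
    rw [euclNorm_smul, abs_of_pos (inv_pos.2 hx), inv_mul_cancel₀ hx.ne']
  have hle : sigMin A ≤ euclNorm (A *ᵥ ((euclNorm x)⁻¹ • x)) :=
    csInf_le ⟨0, by rintro r ⟨y, -, rfl⟩; exact euclNorm_nonneg _⟩ ⟨_, hunit, rfl⟩
  rw [mulVec_smul, euclNorm_smul, abs_of_pos (inv_pos.2 hx), le_inv_mul_iff₀ hx] at hle
  linarith

lemma sigMin_eq_inv_sigMax_inv [DecidableEq n] [Nonempty n] {A : Matrix n n ℝ} (hA : IsUnit A) :
    sigMin A = (sigMax A⁻¹)⁻¹ := by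
  have hdet := (isUnit_iff_isUnit_det A).1 hA
  have hmax : 0 < sigMax A⁻¹ := sigMax_pos fun h => by
    simpa [h] using nonsing_inv_mul A hdet
  have hge : (sigMax A⁻¹)⁻¹ ≤ sigMin A := le_sigMin fun x => by
    have h := euclNorm_mulVec_le A⁻¹ (A *ᵥ x)
    rwa [mulVec_mulVec, nonsing_inv_mul A hdet, one_mulVec, ← inv_mul_le_iff₀ hmax] at h
  have hmin : 0 < sigMin A := (inv_pos.2 hmax).trans_le hge
  have hle : sigMax A⁻¹ ≤ (sigMin A)⁻¹ := sigMax_le (inv_nonneg.2 hmin.le) fun y => by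
    have h := sigMin_mul_euclNorm_le A (A⁻¹ *ᵥ y)
    rwa [mulVec_mulVec, mul_nonsing_inv A hdet, one_mulVec, ← le_inv_mul_iff₀ hmin] at h
  exact le_antisymm ((le_inv_comm₀ hmin hmax).2 hle) hge

lemma condNum_eq_sigMax_mul_sigMax_inv [DecidableEq n] [Nonempty n] {A : Matrix n n ℝ}
    (hA : IsUnit A) : condNum A = sigMax A * sigMax A⁻¹ := by
  rw [condNum, sigMin_eq_inv_sigMax_inv hA, div_inv_eq_mul]

lemma condNum_pos [DecidableEq n] [Nonempty n] {A : Matrix n n ℝ}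
    (hA : IsUnit A) : 0 < condNum A := by
  rw [condNum_eq_sigMax_mul_sigMax_inv hA]
  exact mul_pos (sigMax_pos hA.ne_zero) (sigMax_pos (isUnit_nonsing_inv_iff.2 hA).ne_zero)

end SingularValues

section Frobenius

variable {m n p : Type*} [Fintype m] [Fintype n] [Fintype p]

lemma frob_nonneg (A : Matrix m n ℝ) : 0 ≤ frob A := Real.sqrt_nonneg _

lemma frob_sq (A : Matrix m n ℝ) : frob A ^ 2 = ∑ i, ∑ j, A i j ^ 2 :=
  Real.sq_sqrt (by positivity)

lemma frob_transpose (A : Matrix m n ℝ) : frob Aᵀ = frob A := by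
  rw [frob, frob, Finset.sum_comm]
  rfl

lemma frob_eq_euclNorm_vec (A : Matrix m n ℝ) : frob A = euclNorm (vec A) := by
  rw [frob, euclNorm, Fintype.sum_prod_type, Finset.sum_comm]
  rfl

lemma frob_sq_eq_sum_euclNorm_sq (A : Matrix m n ℝ) : frob A ^ 2 = ∑ i, euclNorm (A i) ^ 2 := by
  rw [frob_sq]
  exact Finset.sum_congr rfl fun i _ => (Real.sq_sqrt (by positivity)).symm

lemma frob_mul_le_frob_mul_sigMax (A : Matrix m n ℝ) (B : Matrix n p ℝ) :
    frob (A * B) ≤ frob A * sigMax B := by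
  refine (sq_le_sq₀ (frob_nonneg _) (mul_nonneg (frob_nonneg _) (sigMax_nonneg _))).1 ?_
  rw [mul_pow, frob_sq_eq_sum_euclNorm_sq, frob_sq_eq_sum_euclNorm_sq, Finset.sum_mul]
  gcongr with i
  have hrow : (A * B) i = Bᵀ *ᵥ A i := by
    ext j
    simp [mul_apply, mulVec, dotProduct, mul_comm]
  rw [hrow, ← mul_pow, mul_comm, ← sigMax_transpose B]
  exact pow_le_pow_left₀ (euclNorm_nonneg _) (euclNorm_mulVec_le _ _) 2

lemma frob_mul_le_sigMax_mul_frob (A : Matrix m n ℝ) (B : Matrix n p ℝ) :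
    frob (A * B) ≤ sigMax A * frob B := by
  rw [← frob_transpose, transpose_mul, ← sigMax_transpose A, ← frob_transpose B, mul_comm]
  exact frob_mul_le_frob_mul_sigMax _ _

lemma frob_mul_mul_le {q : Type*} [Fintype q] (A : Matrix m n ℝ) (B : Matrix n p ℝ)
    (C : Matrix p q ℝ) : frob (A * B * C) ≤ sigMax A * frob B * sigMax C :=
  (frob_mul_le_frob_mul_sigMax _ _).trans <|
    mul_le_mul_of_nonneg_right (frob_mul_le_sigMax_mul_frob _ _) (sigMax_nonneg _)

lemma frob_le_sigMax_mul_sqrt_card (A : Matrix m n ℝ) :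
    frob A ≤ sigMax A * √(Fintype.card n) := by
  classical
  have h1 : frob (1 : Matrix n n ℝ) = √(Fintype.card n) := by
    rw [frob]
    congr 1
    simp [one_apply]
  have h := frob_mul_le_sigMax_mul_frob A (1 : Matrix n n ℝ)
  rwa [Matrix.mul_one, h1] at h

end Frobenius

section LowerBound

variable {m n ι : Type*} [Fintype m] [Fintype n]

lemma dotProduct_sum_transpose_mul_self_mulVec (s : Finset ι) (t : ι → Matrix m n ℝ)
    (x : n → ℝ) :
    x ⬝ᵥ ((∑ i ∈ s, (t i)ᵀ * t i) *ᵥ x) = ∑ i ∈ s, euclNorm (t i *ᵥ x) ^ 2 := by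
  simp only [sum_mulVec, dotProduct_sum, ← mulVec_mulVec, dotProduct_mulVec, vecMul_transpose,
    euclNorm_sq, dotProduct_comm]

lemma mul_euclNorm_le_of_mul_sq_le_sum (s : Finset ι) (t : ι → Matrix m n ℝ) {c : ℝ}
    {x : n → ℝ} (h : c * euclNorm x ^ 2 ≤ ∑ i ∈ s, euclNorm (t i *ᵥ x) ^ 2) :
    c * euclNorm x ≤ euclNorm ((∑ i ∈ s, (t i)ᵀ * t i) *ᵥ x) := by
  rcases (euclNorm_nonneg x).eq_or_lt with hx | hx
  · rw [← hx, mul_zero]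
    exact euclNorm_nonneg _
  refine le_of_mul_le_mul_right ?_ hx
  calc c * euclNorm x * euclNorm x = c * euclNorm x ^ 2 := by ring
    _ ≤ x ⬝ᵥ ((∑ i ∈ s, (t i)ᵀ * t i) *ᵥ x) := by
      rwa [dotProduct_sum_transpose_mul_self_mulVec]
    _ ≤ euclNorm x * euclNorm ((∑ i ∈ s, (t i)ᵀ * t i) *ᵥ x) := dotProduct_le_euclNorm_mul _ _
    _ = _ := mul_comm _ _

variable [DecidableEq n] {T : Matrix n n ℝ} {c : ℝ}

lemma isUnit_of_mul_euclNorm_le (hc : 0 < c) (h : ∀ x, c * euclNorm x ≤ euclNorm (T *ᵥ x)) :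
    IsUnit T := by
  refine mulVec_injective_iff_isUnit.1 fun x y hxy => ?_
  have hxy' := h (x - y)
  rw [mulVec_sub, hxy, sub_self, show euclNorm (0 : n → ℝ) = 0 by simp [euclNorm]] at hxy'
  have h0 : euclNorm (x - y) = 0 := by nlinarith [euclNorm_nonneg (x - y)]
  simpa [euclNorm_eq_norm, sub_eq_zero] using h0

lemma frob_inv_le_of_mul_euclNorm_le (hc : 0 < c)
    (h : ∀ x, c * euclNorm x ≤ euclNorm (T *ᵥ x)) :
    frob T⁻¹ ≤ √(Fintype.card n) / c := by
  have hT := mul_nonsing_inv T ((isUnit_iff_isUnit_det T).1 (isUnit_of_mul_euclNorm_le hc h))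
  have hinv : sigMax T⁻¹ ≤ c⁻¹ := sigMax_le (inv_nonneg.2 hc.le) fun y => by
    have hy := h (T⁻¹ *ᵥ y)
    rwa [mulVec_mulVec, hT, one_mulVec, ← le_inv_mul_iff₀ hc] at hy
  calc frob T⁻¹ ≤ sigMax T⁻¹ * √(Fintype.card n) := frob_le_sigMax_mul_sqrt_card _
    _ ≤ c⁻¹ * √(Fintype.card n) := by gcongr
    _ = √(Fintype.card n) / c := by ring

end LowerBound

section Gap

variable {d N : ℕ}

lemma gapMin_le (Λ : Fin N → Fin d → ℝ) {i j : Fin d} (hij : i ≠ j) :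
    gapMin Λ ≤ ∑ n, (Λ n i - Λ n j) ^ 2 := by
  have hbdd : BddBelow {r | ∃ i i' : Fin d, i < i' ∧ r = ∑ n, (Λ n i - Λ n i') ^ 2} :=
    ⟨0, by rintro r ⟨a, b, -, rfl⟩; positivity⟩
  rcases hij.lt_or_gt with h | h
  · exact csInf_le hbdd ⟨i, j, h, rfl⟩
  · refine (csInf_le hbdd ⟨j, i, h, rfl⟩).trans_eq (Finset.sum_congr rfl fun n _ => ?_)
    ring

lemma one_lt_of_gapMin_pos {Λ : Fin N → Fin d → ℝ} (h : 0 < gapMin Λ) : 1 < d := by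
  by_contra hd
  have hempty : {r | ∃ i i' : Fin d, i < i' ∧ r = ∑ n, (Λ n i - Λ n i') ^ 2} = ∅ :=
    Set.eq_empty_of_forall_notMem fun r ⟨i, i', hii', _⟩ => by omega
  rw [gapMin, hempty, Real.sInf_empty] at h
  exact h.false

lemma exists_ne_of_gapMin_pos {Λ : Fin N → Fin d → ℝ} (h : 0 < gapMin Λ) {i j : Fin d}
    (hij : i ≠ j) :
    ∃ n, Λ n i ≠ Λ n j := by
  by_contra! hΛ
  have h0 : ∑ n, (Λ n i - Λ n j) ^ 2 = 0 := by simp [hΛ]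
  linarith [gapMin_le Λ hij]

end Gap

section LowerTriangular

variable {d : ℕ}

lemma lowPart_eq_self_iff {X : Mat d} : lowPart X = X ↔ ∀ i j, i ≤ j → X i j = 0 := by
  refine ⟨fun h i j hij => ?_, fun h => ?_⟩
  · rw [← h]
    simp [lowPart, not_lt.2 hij]
  · ext i j
    by_cases hij : j < i
    · simp [lowPart, hij]
    · simp [lowPart, hij, h i j (not_lt.1 hij)]

lemma blockTriangular_of_lowPart_eq_zero {A : Mat d} (h : lowPart A = 0) :
    A.BlockTriangular id := fun i j hij => by
  simpa [lowPart, show j < i from hij] using congr_fun₂ h i j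

lemma vec_lowPart (X : Mat d) : vec (lowPart X) = lowOp d *ᵥ vec X := by
  ext ⟨j, i⟩
  simp [lowPart, lowOp, mulVec_diagonal]

lemma lowPart_transpose_mul_sub_mul_transpose {A X : Mat d} (hA : A.BlockTriangular id)
    (hX : lowPart X = X) : lowPart (Aᵀ * X - X * Aᵀ) = Aᵀ * X - X * Aᵀ := by
  rw [lowPart_eq_self_iff] at hX ⊢
  intro i j hij
  have hAX : (Aᵀ * X) i j = 0 := by
    rw [mul_apply]
    refine Finset.sum_eq_zero fun a _ => ?_
    rcases le_or_gt a i with ha | ha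
    · rw [hX a j (ha.trans hij), mul_zero]
    · rw [transpose_apply, hA ha, zero_mul]
  have hXA : (X * Aᵀ) i j = 0 := by
    rw [mul_apply]
    refine Finset.sum_eq_zero fun a _ => ?_
    rcases lt_or_ge a j with ha | ha
    · rw [transpose_apply, hA ha, mul_zero]
    · rw [hX i a (hij.trans ha), zero_mul]
  rw [Matrix.sub_apply, hAX, hXA, sub_zero]

end LowerTriangular

namespace IsPlow

variable {d k : ℕ} {P : Matrix (Fin k) (Fin d × Fin d) ℝ}

lemma euclNorm_transpose_mulVec (hP : IsPlow P) (x : Fin k → ℝ) :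
    euclNorm (Pᵀ *ᵥ x) = euclNorm x :=
  euclNorm_mulVec_of_transpose_mul_mulVec (by rw [transpose_transpose, hP.1, one_mulVec])

lemma frob_matM_transpose_mulVec (hP : IsPlow P) (x : Fin k → ℝ) :
    frob (matM (Pᵀ *ᵥ x)) = euclNorm x := by
  rw [frob_eq_euclNorm_vec, ← hP.euclNorm_transpose_mulVec]
  rfl

lemma lowPart_matM_transpose_mulVec (hP : IsPlow P) (x : Fin k → ℝ) :
    lowPart (matM (Pᵀ *ᵥ x)) = matM (Pᵀ *ᵥ x) := by
  rw [← vec_inj, vec_lowPart]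
  change lowOp d *ᵥ (Pᵀ *ᵥ x) = Pᵀ *ᵥ x
  rw [mulVec_mulVec, ← hP.2, Matrix.mul_assoc, hP.1, Matrix.mul_one]

lemma euclNorm_mulVec_vec (hP : IsPlow P) {X : Mat d} (hX : lowPart X = X) :
    euclNorm (P *ᵥ vec X) = frob X := by
  rw [euclNorm_mulVec_of_transpose_mul_mulVec (by rw [hP.2, ← vec_lowPart, hX]),
    frob_eq_euclNorm_vec]

lemma euclNorm_ttil_mulVec (hP : IsPlow P) {A : Mat d} (hA : lowPart A = 0) (x : Fin k → ℝ) :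
    euclNorm (ttil P A *ᵥ x) =
      frob (Aᵀ * matM (Pᵀ *ᵥ x) - matM (Pᵀ *ᵥ x) * Aᵀ) := by
  set X := matM (Pᵀ *ᵥ x)
  have hX : Pᵀ *ᵥ x = vec X := rfl
  rw [ttil, ← mulVec_mulVec, ← mulVec_mulVec, hX, sub_mulVec, kronecker_mulVec_vec,
    kronecker_mulVec_vec, transpose_one, Matrix.mul_one, Matrix.one_mul, ← vec_sub,
    hP.euclNorm_mulVec_vec (lowPart_transpose_mul_sub_mul_transpose
      (blockTriangular_of_lowPart_eq_zero hA) (hP.lowPart_matM_transpose_mulVec x))]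

end IsPlow

section JointEigenbasis

variable {K ι κ : Type*} [Field K] [Fintype ι] [LinearOrder ι]
  {A : κ → Matrix ι ι K} {B Bi : Matrix ι ι K} {Λ : κ → ι → K}

/-- The columns of `B` are joint eigenvectors of the upper-triangular `A n`; the last nonzero
entry of a column sits on the diagonal entry carrying its eigenvalues, so separated eigenvalues
force distinct last positions, and sorting the columns by them makes `B` upper triangular. -/
theorem exists_perm_blockTriangular_submatrix (hB : Bi * B = 1)
    (hA : ∀ n, (A n).BlockTriangular id) (hAB : ∀ n, A n * B = B * diagonal (Λ n))
    (hΛ : ∀ i j, i ≠ j → ∃ n, Λ n i ≠ Λ n j) :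
    ∃ σ : Equiv.Perm ι, (B.submatrix id σ).BlockTriangular id := by
  classical
  have hcol : ∀ c, (Finset.univ.filter fun i => B i c ≠ 0).Nonempty := by
    intro c
    by_contra hc
    simp only [Finset.not_nonempty_iff_eq_empty, Finset.filter_eq_empty_iff, Finset.mem_univ,
      true_implies, not_not] at hc
    have h0 : (Bi * B) c c = 0 := Finset.sum_eq_zero fun i _ => by simp [hc]
    simp [hB] at h0
  let h : ι → ι := fun c => (Finset.univ.filter fun i => B i c ≠ 0).max' (hcol c)
  have hne : ∀ c, B (h c) c ≠ 0 := fun c => (Finset.mem_filter.1 (Finset.max'_mem _ (hcol c))).2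
  have hzero : ∀ c i, h c < i → B i c = 0 := fun c i hi => by
    by_contra hBi
    exact (Finset.le_max' _ i (by simp [hBi])).not_gt hi
  have heig : ∀ n c, Λ n c = A n (h c) (h c) := by
    intro n c
    have hc := congr_fun₂ (hAB n) (h c) c
    rw [mul_apply, mul_diagonal, Finset.sum_eq_single (h c)] at hc
    · exact mul_right_cancel₀ (hne c) (by rw [hc, mul_comm])
    · intro a _ ha
      rcases ha.lt_or_gt with ha | ha
      · rw [show A n (h c) a = 0 from hA n ha, zero_mul]
      · rw [hzero c a ha, mul_zero]
    · simp
  have hinj : Function.Injective h := fun c c' hcc => by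
    by_contra hcc'
    obtain ⟨n, hn⟩ := hΛ c c' hcc'
    exact hn (by rw [heig, heig, hcc])
  let e := Equiv.ofBijective h (Finite.injective_iff_bijective.1 hinj)
  refine ⟨e.symm, fun i j hij => hzero _ _ ?_⟩
  change e (e.symm j) < i
  rwa [e.apply_symm_apply]

theorem transpose_mul_mul_transpose_apply_self_eq_zero (hB : Bi * B = 1)
    (hA : ∀ n, (A n).BlockTriangular id) (hAB : ∀ n, A n * B = B * diagonal (Λ n))
    (hΛ : ∀ i j, i ≠ j → ∃ n, Λ n i ≠ Λ n j) {X : Matrix ι ι K} (hX : ∀ i j, i ≤ j → X i j = 0)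
    (c : ι) : (Bᵀ * X * Biᵀ) c c = 0 := by
  obtain ⟨σ, hσ⟩ := exists_perm_blockTriangular_submatrix hB hA hAB hΛ
  have hσi : (Bi.submatrix σ id).BlockTriangular id := by
    have hinv : Bi.submatrix σ id * B.submatrix id σ = 1 := by
      change Bi.submatrix σ (Equiv.refl ι) * B.submatrix (Equiv.refl ι) σ = 1
      rw [submatrix_mul_equiv, hB, submatrix_one_equiv]
    have : Invertible (B.submatrix id σ) := invertibleOfLeftInverse _ _ hinv
    simpa [inv_eq_left_inv hinv] using blockTriangular_inv_of_blockTriangular hσ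
  simp only [mul_apply, transpose_apply, Finset.sum_mul]
  refine Finset.sum_eq_zero fun b _ => Finset.sum_eq_zero fun a _ => ?_
  rcases lt_or_ge (σ.symm c) a with ha | ha
  · rw [show B a c = 0 by simpa using hσ ha, zero_mul, zero_mul]
  rcases lt_or_ge b (σ.symm c) with hb | hb
  · rw [show Bi c b = 0 by simpa using hσi hb, mul_zero]
  rw [hX a b (ha.trans hb), mul_zero, zero_mul]

end JointEigenbasis

section Commutator

variable {ι κ : Type*} [Fintype ι] [DecidableEq ι] [Fintype κ] {μ : κ → ι → ℝ} {γ : ℝ}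

lemma mul_frob_sq_le_sum_frob_diagonal_commutator_sq
    (hγ : ∀ i j, i ≠ j → γ ≤ ∑ n, (μ n i - μ n j) ^ 2) {Y : Matrix ι ι ℝ} (hY : ∀ i, Y i i = 0) :
    γ * frob Y ^ 2 ≤ ∑ n, frob (diagonal (μ n) * Y - Y * diagonal (μ n)) ^ 2 := by
  have hentry : ∀ n i j,
      (diagonal (μ n) * Y - Y * diagonal (μ n)) i j = (μ n i - μ n j) * Y i j := by
    intro n i j
    simp only [Matrix.sub_apply, diagonal_mul, mul_diagonal]
    ring
  have hswap : ∑ n, frob (diagonal (μ n) * Y - Y * diagonal (μ n)) ^ 2 =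
      ∑ i, ∑ j, (∑ n, (μ n i - μ n j) ^ 2) * Y i j ^ 2 := by
    simp only [frob_sq, hentry, mul_pow, Finset.sum_mul]
    rw [Finset.sum_comm]
    exact Finset.sum_congr rfl fun i _ => Finset.sum_comm
  rw [hswap, frob_sq, Finset.mul_sum]
  refine Finset.sum_le_sum fun i _ => ?_
  rw [Finset.mul_sum]
  refine Finset.sum_le_sum fun j _ => ?_
  rcases eq_or_ne i j with rfl | hij
  · simp [hY]
  · exact mul_le_mul_of_nonneg_right (hγ i j hij) (sq_nonneg _)

theorem mul_frob_sq_le_sum_frob_commutator_sq {L Li : Matrix ι ι ℝ} (hL : L * Li = 1)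
    (hLi : Li * L = 1) (hγ0 : 0 ≤ γ) (hγ : ∀ i j, i ≠ j → γ ≤ ∑ n, (μ n i - μ n j) ^ 2)
    {X : Matrix ι ι ℝ} (hX : ∀ i, (L * X * Li) i i = 0) :
    γ * frob X ^ 2 ≤ (sigMax L * sigMax Li) ^ 4 *
      ∑ n, frob (Li * diagonal (μ n) * L * X - X * (Li * diagonal (μ n) * L)) ^ 2 := by
  set s := sigMax L * sigMax Li
  set Y := L * X * Li
  set C := fun n => Li * diagonal (μ n) * L * X - X * (Li * diagonal (μ n) * L)
  have hXY : X = Li * Y * L := by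
    rw [show Li * Y * L = Li * L * X * (Li * L) by simp only [Y, Matrix.mul_assoc], hLi,
      Matrix.one_mul, Matrix.mul_one]
  have hCY : ∀ n, diagonal (μ n) * Y - Y * diagonal (μ n) = L * C n * Li := fun n => by
    rw [show L * C n * Li = L * Li * diagonal (μ n) * Y - Y * diagonal (μ n) * (L * Li) by
      simp only [C, Y, Matrix.mul_sub, Matrix.sub_mul, Matrix.mul_assoc], hL, Matrix.one_mul,
      Matrix.mul_one]
  have hXle : frob X ≤ s * frob Y := by
    rw [hXY]
    exact (frob_mul_mul_le _ _ _).trans_eq (by ring)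
  have hCle : ∀ n, frob (diagonal (μ n) * Y - Y * diagonal (μ n)) ≤ s * frob (C n) := fun n => by
    rw [hCY]
    exact (frob_mul_mul_le _ _ _).trans_eq (by ring)
  have hs : 0 ≤ s := mul_nonneg (sigMax_nonneg _) (sigMax_nonneg _)
  calc γ * frob X ^ 2 ≤ γ * (s * frob Y) ^ 2 := by gcongr; exact frob_nonneg _
    _ = s ^ 2 * (γ * frob Y ^ 2) := by ring
    _ ≤ s ^ 2 * ∑ n, frob (diagonal (μ n) * Y - Y * diagonal (μ n)) ^ 2 := by
      gcongr
      exact mul_frob_sq_le_sum_frob_diagonal_commutator_sq hγ hX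
    _ ≤ s ^ 2 * ∑ n, (s * frob (C n)) ^ 2 := by
      gcongr with n
      · exact frob_nonneg _
      · exact hCle n
    _ = s ^ 4 * ∑ n, frob (C n) ^ 2 := by
      rw [Finset.mul_sum, Finset.mul_sum]
      exact Finset.sum_congr rfl fun n _ => by ring

end Commutator

lemma sigMax_mul_sigMax_le_condNum {d : ℕ} [NeZero d] {U V : Mat d} (hU : IsOrtho U)
    (hV : IsUnit V) : sigMax (Uᵀ * V) * sigMax (V⁻¹ * U) ≤ condNum V := by
  have hUt : sigMax Uᵀ ≤ 1 := sigMax_le_one_of_transpose_mul_self <| by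
    rw [transpose_transpose, mul_eq_one_comm.1 hU]
  have hU' : sigMax U ≤ 1 := sigMax_le_one_of_transpose_mul_self hU
  rw [condNum_eq_sigMax_mul_sigMax_inv hV]
  refine mul_le_mul ?_ ?_ (sigMax_nonneg _) (sigMax_nonneg _)
  · exact (sigMax_mul_le _ _).trans (mul_le_of_le_one_left (sigMax_nonneg _) hUt)
  · exact (sigMax_mul_le _ _).trans (mul_le_of_le_one_right (sigMax_nonneg _) hU')

theorem gapMin_mul_frob_sq_le {d N : ℕ} {B Bi : Mat d} (hB : Bi * B = 1)
    {Λ : Fin N → Fin d → ℝ} (hγ : 0 < gapMin Λ) {A : Fin N → Mat d} (hA : ∀ n, lowPart (A n) = 0)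
    (hAB : ∀ n, A n = B * diagonal (Λ n) * Bi) {X : Mat d} (hX : lowPart X = X) :
    gapMin Λ * frob X ^ 2 ≤
      (sigMax B * sigMax Bi) ^ 4 * ∑ n, frob ((A n)ᵀ * X - X * (A n)ᵀ) ^ 2 := by
  have hdiag : ∀ c, (Bᵀ * X * Biᵀ) c c = 0 :=
    transpose_mul_mul_transpose_apply_self_eq_zero hB
      (fun n => blockTriangular_of_lowPart_eq_zero (hA n))
      (fun n => by rw [hAB n, Matrix.mul_assoc (B * diagonal (Λ n)), hB, Matrix.mul_one])
      (fun i j hij => exists_ne_of_gapMin_pos hγ hij) (lowPart_eq_self_iff.1 hX)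
  have hAt : ∀ n, (A n)ᵀ = Biᵀ * diagonal (Λ n) * Bᵀ := fun n => by
    rw [hAB n, transpose_mul, transpose_mul, diagonal_transpose, Matrix.mul_assoc]
  have h := mul_frob_sq_le_sum_frob_commutator_sq
    (by rw [← transpose_mul, hB, transpose_one])
    (by rw [← transpose_mul, mul_eq_one_comm.1 hB, transpose_one])
    hγ.le (fun i j hij => gapMin_le Λ hij) hdiag
  simpa only [hAt, sigMax_transpose] using h

theorem gapMin_div_condNum_pow_mul_euclNorm_sq_le {d N k : ℕ} {V : Mat d} (hV : IsUnit V)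
    {Λ : Fin N → Fin d → ℝ} {M : Fin N → Mat d} (hM : ∀ n, M n = V * diagonal (Λ n) * V⁻¹)
    (hγ : 0 < gapMin Λ) {U₀ : Mat d} (hU₀ : ExactTriang U₀ M)
    {P : Matrix (Fin k) (Fin d × Fin d) ℝ} (hP : IsPlow P) (x : Fin k → ℝ) :
    gapMin Λ / condNum V ^ 4 * euclNorm x ^ 2 ≤
      ∑ n, euclNorm (ttil P (U₀ᵀ * M n * U₀) *ᵥ x) ^ 2 := by
  obtain ⟨hU, hlow⟩ := hU₀
  have : NeZero d := ⟨by have := one_lt_of_gapMin_pos hγ; omega⟩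
  have hB : V⁻¹ * U₀ * (U₀ᵀ * V) = 1 := by
    rw [Matrix.mul_assoc, ← Matrix.mul_assoc U₀, mul_eq_one_comm.1 hU, Matrix.one_mul,
      nonsing_inv_mul _ ((isUnit_iff_isUnit_det V).1 hV)]
  have h := gapMin_mul_frob_sq_le hB hγ hlow (fun n => by rw [hM n]; simp only [Matrix.mul_assoc])
    (hP.lowPart_matM_transpose_mulVec x)
  rw [hP.frob_matM_transpose_mulVec] at h
  simp only [hP.euclNorm_ttil_mulVec (hlow _)]
  rw [div_mul_eq_mul_div, div_le_iff₀ (pow_pos (condNum_pos hV) 4), mul_comm _ (condNum V ^ 4)]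
  refine h.trans (mul_le_mul_of_nonneg_right ?_ (by positivity))
  exact pow_le_pow_left₀ (mul_nonneg (sigMax_nonneg _) (sigMax_nonneg _))
    (sigMax_mul_sigMax_le_condNum hU hV) 4

/-- the operator `T = Σₙ tₙᵀ tₙ` is invertible, with
`σ_min(T) ≥ γ/κ(V)⁴` and `‖T⁻¹‖ ≤ √(d(d−1)/2)·κ(V)⁴/γ`. -/
theorem ttil_operator_invertible {d N k : ℕ} (hk : 2 * k = d * (d - 1))
    (V : Mat d) (hV : IsUnit V)
    (Λ : Fin N → Fin d → ℝ) (M : Fin N → Mat d)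
    (hM : ∀ n, M n = V * Matrix.diagonal (Λ n) * V⁻¹)
    (hγ : 0 < gapMin Λ)
    (U₀ : Mat d) (hU₀ : ExactTriang U₀ M)
    (P : Matrix (Fin k) (Fin d × Fin d) ℝ) (hP : IsPlow P) :
    IsUnit (∑ n, (ttil P (U₀ᵀ * M n * U₀))ᵀ * ttil P (U₀ᵀ * M n * U₀)) ∧
    gapMin Λ / condNum V ^ 4 ≤
      sigMin (∑ n, (ttil P (U₀ᵀ * M n * U₀))ᵀ * ttil P (U₀ᵀ * M n * U₀)) ∧
    frob (∑ n, (ttil P (U₀ᵀ * M n * U₀))ᵀ * ttil P (U₀ᵀ * M n * U₀))⁻¹ ≤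
      Real.sqrt ((d : ℝ) * ((d : ℝ) - 1) / 2) * condNum V ^ 4 / gapMin Λ := by
  have hd := one_lt_of_gapMin_pos hγ
  have : NeZero d := ⟨by omega⟩
  have : NeZero k := ⟨by rintro rfl; rw [mul_zero, eq_comm, Nat.mul_eq_zero] at hk; omega⟩
  have hc : 0 < gapMin Λ / condNum V ^ 4 := div_pos hγ (pow_pos (condNum_pos hV) 4)
  have hbound := fun x => mul_euclNorm_le_of_mul_sq_le_sum _ _
    (gapMin_div_condNum_pow_mul_euclNorm_sq_le hV hM hγ hU₀ hP x)
  have hkR : (k : ℝ) = d * (d - 1) / 2 := by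
    have h := congrArg (Nat.cast (R := ℝ)) hk
    push_cast [Nat.cast_sub hd.le] at h
    linarith
  refine ⟨isUnit_of_mul_euclNorm_le hc hbound, le_sigMin hbound, ?_⟩
  calc _ ≤ √(Fintype.card (Fin k)) / (gapMin Λ / condNum V ^ 4) :=
        frob_inv_le_of_mul_euclNorm_le hc hbound
    _ = _ := by rw [Fintype.card_fin, hkR, div_div_eq_mul_div]
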